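/- Let A be a 2×2 matrix with integer entries. If A^n is a diagonal matrix for some n ≥ 1, then A^k is a diagonal matrix with non-negative entries for some k ∈ {1,2,3,4,6,8,12}. -/

import Mathlib

/-!
Write `t = tr A` and `d = det A`, and let `U` be the Lucas sequence of `X² - t X + d`. By
Cayley–Hamilton, `A ^ (j + 1) = U (j + 1) • A - (d * U j) • 1`, so when `A` is not diagonal,
`A ^ j` is diagonal iff `U j = 0`, i.e. iff `a ^ j = b ^ j` for the complex roots `a ≠ b` of
`X² - t X + d` (a double root forces `t = 0`). Then `z = a / b` is a root of unity, so
`z + z⁻¹ = (t² - 2d) / d` is a rational algebraic integer of absolute value at most `2`; the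
quadratic `z² - w z + 1 = 0` with `w ∈ {-2, …, 2}` gives `z ^ m = 1` with `m ∈ {1, 2, 3, 4, 6}`.
Hence `A ^ m` is scalar and `A ^ (2 m) = (A ^ m) ^ 2` is diagonal with square entries.
-/

def lucasU {R : Type*} [CommRing R] (t d : R) : ℕ → R
  | 0 => 0
  | 1 => 1
  | j + 2 => t * lucasU t d (j + 1) - d * lucasU t d j

section lucasU

variable {R S : Type*} [CommRing R] [CommRing S]

@[simp] lemma lucasU_zero (t d : R) : lucasU t d 0 = 0 := rfl

@[simp] lemma lucasU_one (t d : R) : lucasU t d 1 = 1 := rfl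

lemma lucasU_add_two (t d : R) (j : ℕ) :
    lucasU t d (j + 2) = t * lucasU t d (j + 1) - d * lucasU t d j := rfl

lemma map_lucasU (f : R →+* S) (t d : R) (j : ℕ) :
    f (lucasU t d j) = lucasU (f t) (f d) j := by
  induction j using Nat.twoStepInduction with
  | zero | one => simp
  | more j ih₀ ih₁ => simp [lucasU_add_two, ih₀, ih₁]

@[simp, norm_cast]
lemma Int.cast_lucasU (t d : ℤ) (j : ℕ) : ((lucasU t d j : ℤ) : R) = lucasU (t : R) (d : R) j :=
  map_lucasU (Int.castRingHom R) t d j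

lemma sub_mul_lucasU (a b : R) (j : ℕ) :
    (a - b) * lucasU (a + b) (a * b) j = a ^ j - b ^ j := by
  induction j using Nat.twoStepInduction with
  | zero | one => simp
  | more j ih₀ ih₁ =>
    rw [lucasU_add_two]
    linear_combination (a + b) * ih₁ - a * b * ih₀

lemma lucasU_two_mul_sq (a : R) (j : ℕ) :
    lucasU (2 * a) (a ^ 2) (j + 1) = (j + 1) * a ^ j := by
  induction j using Nat.twoStepInduction with
  | zero => simp
  | one => simp [lucasU, one_add_one_eq_two]
  | more j ih₀ ih₁ =>
    rw [lucasU_add_two, ih₁, ih₀]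
    push_cast
    ring

end lucasU

theorem Complex.exists_int_add_inv_eq_of_pow_eq_one {z : ℂ} {n : ℕ} (hn : n ≠ 0) (hz : z ^ n = 1)
    {q : ℚ} (hq : z + z⁻¹ = q) : ∃ w : ℤ, z + z⁻¹ = w ∧ |w| ≤ 2 := by
  have hint : IsIntegral ℤ z := .of_pow (Nat.pos_of_ne_zero hn) (hz ▸ isIntegral_one)
  have hint' : IsIntegral ℤ z⁻¹ :=
    .of_pow (Nat.pos_of_ne_zero hn) (by simp [inv_pow, hz, isIntegral_one])
  obtain ⟨w, hw⟩ := (hint.add hint').exists_int_iff_exists_rat.1 ⟨q, hq⟩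
  refine ⟨w, hw, ?_⟩
  have hnorm : ‖z‖ = 1 := norm_eq_one_of_pow_eq_one hz hn
  have : ‖(w : ℂ)‖ ≤ 2 := by
    calc ‖(w : ℂ)‖ = ‖z + z⁻¹‖ := by rw [hw]
      _ ≤ ‖z‖ + ‖z⁻¹‖ := norm_add_le _ _
      _ = 2 := by rw [norm_inv, hnorm]; norm_num
  rw [norm_intCast] at this
  exact_mod_cast this

theorem Complex.exists_pow_eq_one_of_add_inv_eq_ratCast {z : ℂ} {n : ℕ} (hn : n ≠ 0)
    (hz : z ^ n = 1) {q : ℚ} (hq : z + z⁻¹ = q) :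
    ∃ m ∈ ({1, 2, 3, 4, 6} : Finset ℕ), z ^ m = 1 := by
  obtain ⟨w, hw, hw2⟩ := exists_int_add_inv_eq_of_pow_eq_one hn hz hq
  have hz0 : z ≠ 0 := by rintro rfl; simp [hn] at hz
  have hquad : z ^ 2 - w * z + 1 = 0 := by
    rw [← hw]; field_simp; ring
  obtain ⟨hlo, hhi⟩ := abs_le.1 hw2
  interval_cases w <;> push_cast at hquad
  · refine ⟨2, by simp, ?_⟩
    have : z + 1 = 0 := pow_eq_zero_iff two_ne_zero |>.1 (by linear_combination hquad)
    linear_combination (z - 1) * this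
  · exact ⟨3, by simp, by linear_combination (z - 1) * hquad⟩
  · exact ⟨4, by simp, by linear_combination (z ^ 2 - 1) * hquad⟩
  · exact ⟨6, by simp, by linear_combination (z ^ 4 + z ^ 3 - z - 1) * hquad⟩
  · refine ⟨1, by simp, ?_⟩
    have : z - 1 = 0 := pow_eq_zero_iff two_ne_zero |>.1 (by linear_combination hquad)
    linear_combination this

theorem Int.exists_lucasU_eq_zero {t d : ℤ} {n : ℕ} (hn : n ≠ 0) (h : lucasU t d n = 0) :
    ∃ m ∈ ({1, 2, 3, 4, 6} : Finset ℕ), lucasU t d m = 0 := by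
  obtain ⟨a, b, hsum, hprod⟩ : ∃ a b : ℂ, a + b = t ∧ a * b = d := by
    obtain ⟨s, hs⟩ := IsAlgClosed.exists_pow_nat_eq ((t : ℂ) ^ 2 - 4 * d) two_pos
    exact ⟨(t + s) / 2, (t - s) / 2, by ring, by linear_combination (-1 / 4 : ℂ) * hs⟩
  have hU (m : ℕ) : lucasU t d m = 0 ↔ lucasU (a + b) (a * b) m = 0 := by
    rw [hsum, hprod, ← Int.cast_lucasU, Int.cast_eq_zero]
  rcases eq_or_ne a b with rfl | hab
  · obtain ⟨j, rfl⟩ := Nat.exists_eq_succ_of_ne_zero hn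
    rw [hU, ← two_mul, ← sq, lucasU_two_mul_sq] at h
    have ha : a = 0 := pow_eq_zero_iff' |>.1 ((mul_eq_zero.1 h).resolve_left (by norm_cast)) |>.1
    refine ⟨2, by simp, ?_⟩
    rw [hU, ha]
    simp [lucasU_add_two]
  · have hpow (m : ℕ) : lucasU t d m = 0 ↔ a ^ m = b ^ m := by
      rw [hU, ← sub_eq_zero (a := a ^ m), ← sub_mul_lucasU, mul_eq_zero,
        or_iff_right (sub_ne_zero.2 hab)]
    have hn' := (hpow n).1 h
    have hb : b ≠ 0 := by
      rintro rfl
      exact hab (pow_eq_zero_iff hn |>.1 (by simpa [hn] using hn'))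
    have ha : a ≠ 0 := by
      rintro rfl
      exact hb (pow_eq_zero_iff hn |>.1 (by simpa [hn] using hn'.symm))
    have hz (m : ℕ) : (a / b) ^ m = 1 ↔ a ^ m = b ^ m := by
      rw [div_pow, div_eq_one_iff_eq (pow_ne_zero _ hb)]
    have hq : a / b + (a / b)⁻¹ = (((t ^ 2 - 2 * d : ℤ) : ℚ) / d : ℚ) := by
      push_cast
      rw [← hsum, ← hprod]
      field_simp
      ring
    obtain ⟨m, hm, hzm⟩ := Complex.exists_pow_eq_one_of_add_inv_eq_ratCast hn ((hz n).2 hn') hq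
    exact ⟨m, hm, (hpow m).2 ((hz m).1 hzm)⟩

theorem Matrix.sq_eq_trace_smul_sub_det_smul {R : Type*} [CommRing R]
    (A : Matrix (Fin 2) (Fin 2) R) :
    A ^ 2 = A.trace • A - A.det • 1 := by
  ext i j
  fin_cases i <;> fin_cases j <;>
    simp [sq, Matrix.mul_apply, trace_fin_two, det_fin_two] <;> ring

theorem Matrix.pow_succ_eq_lucasU {R : Type*} [CommRing R] (A : Matrix (Fin 2) (Fin 2) R)
    (j : ℕ) :
    A ^ (j + 1) = lucasU A.trace A.det (j + 1) • A - (A.det * lucasU A.trace A.det j) • 1 := by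
  induction j with
  | zero => simp
  | succ j ih =>
    rw [pow_succ, ih, sub_mul, smul_mul_assoc, ← sq, sq_eq_trace_smul_sub_det_smul,
      lucasU_add_two]
    simp only [smul_mul_assoc, one_mul, smul_sub, smul_smul]
    module

theorem Matrix.isDiag_pow_iff_lucasU_eq_zero {R : Type*} [CommRing R] [NoZeroDivisors R]
    {A : Matrix (Fin 2) (Fin 2) R} (hA : ¬A.IsDiag) {n : ℕ} (hn : n ≠ 0) :
    (A ^ n).IsDiag ↔ lucasU A.trace A.det n = 0 := by
  obtain ⟨j, rfl⟩ := Nat.exists_eq_succ_of_ne_zero hn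
  rw [pow_succ_eq_lucasU]
  constructor
  · intro h
    obtain ⟨i, k, hik, hA⟩ : ∃ i k, i ≠ k ∧ A i k ≠ 0 := by
      by_contra! hoff
      exact hA fun i k hik => hoff i k hik
    have hentry := h hik
    simp only [sub_apply, smul_apply, one_apply_ne hik, smul_eq_mul, mul_zero, sub_zero]
      at hentry
    exact (mul_eq_zero.1 hentry).resolve_right hA
  · intro h
    rw [h, zero_smul, zero_sub, ← neg_smul]
    exact isDiag_smul_one _ _

theorem Matrix.IsDiag.sq {n α : Type*} [Fintype n] [DecidableEq n] [Ring α] [LinearOrder α]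
    [IsStrictOrderedRing α] {A : Matrix n n α} (hA : A.IsDiag) :
    (A ^ 2).IsDiag ∧ ∀ i j, 0 ≤ (A ^ 2) i j := by
  rw [← hA.diagonal_diag, diagonal_pow]
  refine ⟨isDiag_diagonal _, fun i j => ?_⟩
  rw [diagonal_apply]
  split_ifs
  · exact sq_nonneg _
  · rfl

theorem Matrix.exists_isDiag_pow_of_isDiag_pow (A : Matrix (Fin 2) (Fin 2) ℤ) {n : ℕ}
    (hn : n ≠ 0) (h : (A ^ n).IsDiag) :
    ∃ m ∈ ({1, 2, 3, 4, 6} : Finset ℕ), (A ^ m).IsDiag := by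
  by_cases hA : A.IsDiag
  · exact ⟨1, by simp, by rwa [pow_one]⟩
  obtain ⟨m, hm, hU⟩ := Int.exists_lucasU_eq_zero hn ((isDiag_pow_iff_lucasU_eq_zero hA hn).1 h)
  exact ⟨m, hm, (isDiag_pow_iff_lucasU_eq_zero hA (by rintro rfl; simp at hm)).2 hU⟩

/-- If a power `A^n` (n ≥ 1) of a 2×2 integer matrix is diagonal, then `A^k` is
diagonal with non-negative entries for some `k ∈ {1,2,3,4,6,8,12}`. -/
theorem stmt_1 (A : Matrix (Fin 2) (Fin 2) ℤ) (n : ℕ) (hn : 1 ≤ n)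
    (h : (A ^ n).IsDiag) :
    ∃ k ∈ ({1, 2, 3, 4, 6, 8, 12} : Finset ℕ),
      (A ^ k).IsDiag ∧ ∀ i j, 0 ≤ (A ^ k) i j := by
  obtain ⟨m, hm, hdiag⟩ := A.exists_isDiag_pow_of_isDiag_pow (by omega) h
  refine ⟨m * 2, ?_, by rw [pow_mul]; exact hdiag.sq⟩
  simp only [Finset.mem_insert, Finset.mem_singleton] at hm ⊢
  omega
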